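/- arXiv:2405.04468 — 2 statements merged into one kernel-verified Lean document; each statement's English description precedes it below -/
import Mathlib

section
/- Fix q_H* > 0 and bounded quantity set [q_L*, q̄] with q̄ > q_H*. Suppose (θ_L^n) is a sequence of low-type marginal costs with θ_L^n → θ_H, so that q_L*(θ_L^n) → q_H*. If q̃^n ∈ [q_L*(θ_L^n), q̄] satisfies π_L^n(q_L*^n) - π_H(q_H*) ≥ ln(q̃^n/(q̃^n - q_H*))·[π_L^n(q_L*^n) - π_H(q̃^n)] for all n, then q̃^n → q_H* and ln(q̃^n/(q̃^n - q_H*)) → ∞, while the constraint π_L^n(q_L*^n) - π_H(q_H*) < π_L^n(q_L*^n) - π_H(q̃^n) forces limsup_n ln(q̃^n/(q̃^n - q_H*)) ≤ 1, a contradiction. Conclude: there exists θ₂ < θ_H such that for θ_L > θ₂, for all q̃ ∈ [q_L*, q̄]: π_L(q_L*) - π_H(q_H*) < ln(ΔC(q̃)/(ΔC(q̃) - ΔC(q_H*)))·[π_L(q_L*) - π_H(q̃)]. -/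
open Filter Set Real Topology

/-!
As `θ_L ↑ θ_H` the low type's rent `π_L(q_L*) - π_H(q_H*)` tends to `0`, while the right-hand side
stays bounded away from `0`. Below the cutoff `c = q_H* e/(e-1)` the factor `ln(q̃/(q̃-q_H*))` is at
least `1`, so the right-hand side exceeds the rent because `π_H(q̃) < π_H(q_H*)`. On `[c, q̄]` the
factor is at least `ln(q̄/(q̄-q_H*)) > 0` and, by compactness and uniqueness of `q_H*`, the loss
`π_H(q_H*) - π_H(q̃)` is at least some `ε > 0`.
-/

lemma exists_mem_Ioo_forall_of_eventually_nhdsLT {a b : ℝ} (hab : a < b) {p : ℝ → Prop}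
    (h : ∀ᶠ x in 𝓝[<] b, p x) : ∃ c ∈ Ioo a b, ∀ x ∈ Ioo c b, p x := by
  obtain ⟨l, hl, hsub⟩ := mem_nhdsLT_iff_exists_Ioo_subset.1 h
  refine ⟨max l ((a + b) / 2), ⟨?_, max_lt hl (by linarith)⟩, fun x hx => hsub ⟨?_, hx.2⟩⟩
  · exact (by linarith : a < (a + b) / 2).trans_le (le_max_right _ _)
  · exact (le_max_left _ _).trans_lt hx.1

lemma log_div_sub_pos {a r : ℝ} (ha : 0 < a) (har : a < r) : 0 < log (r / (r - a)) :=
  log_pos <| (one_lt_div (by linarith)).2 (by linarith)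

lemma log_div_sub_le_log_div_sub {a q r : ℝ} (ha : 0 < a) (haq : a < q) (hqr : q ≤ r) :
    log (r / (r - a)) ≤ log (q / (q - a)) := by
  refine log_le_log (div_pos (by linarith) (by linarith)) ?_
  rw [div_le_div_iff₀ (by linarith) (by linarith)]
  nlinarith

lemma lt_mul_exp_div_exp_sub_one {a : ℝ} (ha : 0 < a) : a < a * exp 1 / (exp 1 - 1) := by
  have he : 1 < exp 1 := one_lt_exp_iff.2 one_pos
  rw [lt_div_iff₀ (by linarith)]
  nlinarith

lemma one_le_log_div_sub {a q : ℝ} (haq : a < q) (hq : q ≤ a * exp 1 / (exp 1 - 1)) :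
    1 ≤ log (q / (q - a)) := by
  have he : 1 < exp 1 := one_lt_exp_iff.2 one_pos
  rw [le_div_iff₀ (by linarith)] at hq
  rw [← log_exp 1]
  refine log_le_log (exp_pos 1) ?_
  rw [le_div_iff₀ (by linarith)]
  linarith

lemma tendsto_sub_mul_comp {v g : ℝ → ℝ} {l : Filter ℝ} {θ₀ q₀ : ℝ} (hv : Continuous v)
    (hg : Tendsto g l (𝓝 q₀)) (hl : l ≤ 𝓝 θ₀) :
    Tendsto (fun θ => v (g θ) - θ * g θ) l (𝓝 (v q₀ - θ₀ * q₀)) :=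
  ((hv.tendsto q₀).comp hg).sub (tendsto_id.mono_left hl |>.mul hg)

lemma lt_log_div_sub_mul_add {a q r x y ε : ℝ} (ha : 0 < a) (haq : a < q) (hqr : q ≤ r)
    (hx : 0 < x) (hy : 0 < y) (hgap : a * exp 1 / (exp 1 - 1) ≤ q → ε ≤ y)
    (hxε : x < log (r / (r - a)) * ε) :
    x < log (q / (q - a)) * (x + y) := by
  rcases le_or_gt q (a * exp 1 / (exp 1 - 1)) with hq | hq
  · calc x < x + y := by linarith
      _ ≤ log (q / (q - a)) * (x + y) :=
        le_mul_of_one_le_left (by linarith) (one_le_log_div_sub haq hq)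
  · have hL := log_div_sub_pos ha (haq.trans_le hqr)
    have hlog := log_div_sub_le_log_div_sub ha haq hqr
    have hε : 0 < ε := pos_of_mul_pos_right (hx.trans hxε) hL.le
    calc x < log (r / (r - a)) * ε := hxε
      _ ≤ log (q / (q - a)) * (x + y) :=
        mul_le_mul hlog (by linarith [hgap hq.le]) hε.le (hL.le.trans hlog)

/-- Non-revelation for nearly homogeneous types. With linear costs
`C_θ(q) = θq` so that `ΔC(q̃)/(ΔC(q̃)-ΔC(q_H*)) = q̃/(q̃ - q_H*)`, where
`qstar θ` is the surplus maximizer of `π_θ(q) = v(q) - θq` on `[0, q̄]`,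
`q_H* = qstar θ_H` is the unique high-type maximizer, `qstar θ ∈ (q_H*, q̄)`
for `θ < θ_H`, and `qstar θ → q_H*` as `θ ↑ θ_H`: there exists `θ₂ < θ_H`
such that for all `θ_L ∈ (θ₂, θ_H)` and all `q̃ ∈ [qstar θ_L, q̄]`,
`π_L(q_L*) - π_H(q_H*) < ln(q̃/(q̃-q_H*)) · [π_L(q_L*) - π_H(q̃)]`. -/
theorem stmt_11 (v : ℝ → ℝ) (θH qbar : ℝ) (qstar : ℝ → ℝ)
    (hθH : 0 < θH) (hv : Continuous v)
    (hmax : ∀ θ ∈ Set.Ioo (0:ℝ) θH, ∀ q ∈ Set.Icc (0:ℝ) qbar,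
      v q - θ * q ≤ v (qstar θ) - θ * qstar θ)
    (hmem : ∀ θ ∈ Set.Ioo (0:ℝ) θH, qstar θ ∈ Set.Ioo (qstar θH) qbar)
    (hHpos : 0 < qstar θH) (hHbar : qstar θH < qbar)
    (hHuniq : ∀ q ∈ Set.Icc (0:ℝ) qbar, q ≠ qstar θH →
      v q - θH * q < v (qstar θH) - θH * qstar θH)
    (hcont : Tendsto qstar (nhdsWithin θH (Set.Ioo 0 θH)) (nhds (qstar θH))) :
    ∃ θ₂ ∈ Set.Ioo (0:ℝ) θH, ∀ θL ∈ Set.Ioo θ₂ θH, ∀ qt ∈ Set.Icc (qstar θL) qbar,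
      (v (qstar θL) - θL * qstar θL) - (v (qstar θH) - θH * qstar θH) <
        Real.log (qt / (qt - qstar θH)) * ((v (qstar θL) - θL * qstar θL) - (v qt - θH * qt)) := by
  set qH := qstar θH
  set c := qH * exp 1 / (exp 1 - 1)
  have hcH : qH < c := lt_mul_exp_div_exp_sub_one hHpos
  have hloss : ∀ q ∈ Icc c qbar, 0 < (v qH - θH * qH) - (v q - θH * q) := fun q hq =>
    sub_pos.2 <| hHuniq q ⟨by linarith [hq.1], hq.2⟩ (by linarith [hq.1])
  obtain ⟨ε, hε, hgap⟩ := isCompact_Icc.exists_forall_le'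
    (by fun_prop : Continuous fun q => (v qH - θH * qH) - (v q - θH * q)).continuousOn hloss
  have hrent : Tendsto (fun θ => (v (qstar θ) - θ * qstar θ) - (v qH - θH * qH))
      (𝓝[<] θH) (𝓝 0) := by
    rw [nhdsWithin_Ioo_eq_nhdsLT hθH] at hcont
    simpa using (tendsto_sub_mul_comp hv hcont nhdsWithin_le_nhds).sub_const (v qH - θH * qH)
  obtain ⟨θ₂, hθ₂, hsmall⟩ := exists_mem_Ioo_forall_of_eventually_nhdsLT hθH <|
    hrent.eventually (gt_mem_nhds (mul_pos (log_div_sub_pos hHpos hHbar) hε))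
  refine ⟨θ₂, hθ₂, fun θL hθL qt hqt => ?_⟩
  have hθL' : θL ∈ Ioo 0 θH := ⟨hθ₂.1.trans hθL.1, hθL.2⟩
  have hqtH : qH < qt := (hmem θL hθL').1.trans_le hqt.1
  have hrent_pos : 0 < (v (qstar θL) - θL * qstar θL) - (v qH - θH * qH) := by
    have := hmax θL hθL' qH ⟨hHpos.le, hHbar.le⟩
    nlinarith [hθL.2]
  have hloss_qt : 0 < (v qH - θH * qH) - (v qt - θH * qt) :=
    sub_pos.2 <| hHuniq qt ⟨by linarith, hqt.2⟩ hqtH.ne'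
  have key := lt_log_div_sub_mul_add hHpos hqtH hqt.2 hrent_pos hloss_qt
    (fun hcq => hgap qt ⟨hcq, hqt.2⟩) (hsmall θL hθL)
  convert key using 2
  ring
end

section
/- Let G : [a, b] → ℝ be differentiable with the property that G(θ) ≥ 0 implies G'(θ) < 0. If G(θ̃) ≥ 0 for some θ̃ ∈ (a, b], then G(θ) > 0 for all θ ∈ [a, θ̃). -/
/-!
If `G` were `≤ 0` at some `θ < θ̃`, the comparison principle with the barrier `0` keeps `G ≤ 0` on
`[θ, b]`: `G` can only reach `0` with negative slope, so it never crosses zero upwards. Hence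
`G θ̃ = 0`, and `G' θ̃ < 0` forces `G > 0` just to the left of `θ̃`, a contradiction.
-/

open Set Filter Topology

theorem HasDerivAt.eventually_nhdsLT_lt_of_neg {f : ℝ → ℝ} {f' x : ℝ} (hf : HasDerivAt f f' x)
    (hf' : f' < 0) : ∀ᶠ y in 𝓝[<] x, f x < f y := by
  have hslope : ∀ᶠ y in 𝓝[<] x, slope f x y < 0 :=
    (hasDerivAt_iff_tendsto_slope_left_right.1 hf).1.eventually_lt_const hf'
  filter_upwards [hslope, self_mem_nhdsWithin] with y hy hyx
  rwa [slope_def_field, div_lt_iff_of_neg (sub_neg.mpr hyx), zero_mul, sub_pos] at hy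

theorem nonpos_on_Icc_of_deriv_neg_at_zero {f : ℝ → ℝ} {u v : ℝ}
    (hf : ∀ x ∈ Icc u v, DifferentiableAt ℝ f x) (hzero : ∀ x ∈ Ico u v, f x = 0 → deriv f x < 0)
    (hu : f u ≤ 0) : ∀ x ∈ Icc u v, f x ≤ 0 :=
  image_le_of_deriv_right_lt_deriv_boundary (B := fun _ => 0) (B' := fun _ => 0)
    (fun x hx => (hf x hx).continuousAt.continuousWithinAt)
    (fun x hx => (hf x (Ico_subset_Icc_self hx)).hasDerivAt.hasDerivWithinAt) hu
    (fun _ => hasDerivAt_const _ _) hzero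

theorem stmt_13_general (a b θtil : ℝ) (G : ℝ → ℝ)
    (hdiff : ∀ θ ∈ Set.Icc a b, DifferentiableAt ℝ G θ)
    (hprop : ∀ θ ∈ Set.Icc a b, 0 ≤ G θ → deriv G θ < 0)
    (hθtil : θtil ∈ Set.Ioc a b) (hG : 0 ≤ G θtil) :
    ∀ θ ∈ Set.Ico a θtil, 0 < G θ := by
  intro θ hθ
  by_contra! hθneg
  have hsub : Icc θ b ⊆ Icc a b := Icc_subset_Icc_left hθ.1
  have hnonpos : ∀ x ∈ Icc θ b, G x ≤ 0 :=
    nonpos_on_Icc_of_deriv_neg_at_zero (fun x hx => hdiff x (hsub hx))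
      (fun x hx hx0 => hprop x (hsub (Ico_subset_Icc_self hx)) hx0.ge) hθneg
  have hθtil_mem : θtil ∈ Icc θ b := ⟨hθ.2.le, hθtil.2⟩
  have hderiv : deriv G θtil < 0 := hprop θtil (hsub hθtil_mem) hG
  obtain ⟨y, hGy, hy⟩ :=
    (((hdiff θtil (hsub hθtil_mem)).hasDerivAt.eventually_nhdsLT_lt_of_neg hderiv).and
      (Ioo_mem_nhdsLT hθ.2)).exists
  linarith [hnonpos y ⟨hy.1.le, hy.2.le.trans hθtil.2⟩, hnonpos θtil hθtil_mem]

/-- ODE-comparison lemma: if `G` is differentiable on `[a,b]` with `G(θ) ≥ 0`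
implying `G'(θ) < 0`, and `G(θ̃) ≥ 0` at some `θ̃ ∈ (a,b]`, then `G(θ) > 0`
for all `θ ∈ [a, θ̃)`. -/
theorem stmt_13 (a b θtil : ℝ) (G : ℝ → ℝ)
    (hab : a < b)
    (hdiff : ∀ θ ∈ Set.Icc a b, DifferentiableAt ℝ G θ)
    (hprop : ∀ θ ∈ Set.Icc a b, 0 ≤ G θ → deriv G θ < 0)
    (hθtil : θtil ∈ Set.Ioc a b) (hG : 0 ≤ G θtil) :
    ∀ θ ∈ Set.Ico a θtil, 0 < G θ :=
  stmt_13_general a b θtil G hdiff hprop hθtil hG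
end
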